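/- Let λ > 0 and let Δ_λ be the self-adjoint bounded operator on ℓ²(ℕ) given by (Δ_λ f)(n) = a_n^λ f(n+1) − 2f(n) + a_{n-1}^λ f(n-1). Then −Δ_λ is positive: for every f ∈ ℓ²(ℕ), Re ⟨Δ_λ f, f⟩ ≤ 0. -/

import Mathlib

/-- The coefficients `a_n^λ`. -/
noncomputable def aUltra (l : ℝ) (n : ℕ) : ℝ :=
  Real.sqrt ((2 * l + n) * ((n : ℝ) + 1) / (((n : ℝ) + l) * ((n : ℝ) + l + 1)))

/-- The discrete ultraspherical Laplacian `Δ_λ`, with `a_{-1}^λ = 0`. -/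
noncomputable def deltaUltra (l : ℝ) (f : ℕ → ℂ) (n : ℕ) : ℂ :=
  (aUltra l n : ℂ) * f (n + 1) - 2 * f n +
    (if n = 0 then 0 else (aUltra l (n - 1) : ℂ) * f (n - 1))

/-!
Since `Re ⟨Δ_λ f, f⟩ = 2 Re Σ a_n f(n+1) conj f(n) - 2 ‖f‖²`, it suffices to bound
`2 Σ a_n |f(n)| |f(n+1)|` by `2 ‖f‖²`. Factor `a_n² = p_n q_{n+1}` with `p_n = (n + 2λ)/(n + λ)`
and `q_n = n/(n + λ)`, so that `p_n + q_n = 2`. Weighted AM–GM gives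
`2 a_n |f(n)| |f(n+1)| ≤ p_n |f(n)|² + q_{n+1} |f(n+1)|²`, and after re-indexing the second term
the sum over `n` is at most `Σ (p_n + q_n) |f(n)|² = 2 ‖f‖²`.
-/

open ComplexConjugate

noncomputable def jacobiLaplacian (a : ℕ → ℝ) (f : ℕ → ℂ) (n : ℕ) : ℂ :=
  (a n : ℂ) * f (n + 1) - 2 * f n + (if n = 0 then 0 else (a (n - 1) : ℂ) * f (n - 1))

lemma deltaUltra_eq_jacobiLaplacian (l : ℝ) : deltaUltra l = jacobiLaplacian (aUltra l) := rfl

lemma jacobiLaplacian_mul_conj (a : ℕ → ℝ) (f : ℕ → ℂ) (n : ℕ) :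
    jacobiLaplacian a f n * conj (f n) = a n * (f (n + 1) * conj (f n)) - 2 * (‖f n‖ ^ 2 : ℝ) +
      if n = 0 then 0 else conj (a (n - 1) * (f n * conj (f (n - 1)))) := by
  rcases n with _ | m <;>
  · simp [jacobiLaplacian, ← Complex.mul_conj']
    ring

lemma hasSum_ite_zero_pred {M : Type*} [AddCommGroup M] [TopologicalSpace M]
    [IsTopologicalAddGroup M] {g : ℕ → M} {s : M} (h : HasSum g s) :
    HasSum (fun n => if n = 0 then 0 else g (n - 1)) s := by
  rw [← hasSum_nat_add_iff' 1]
  simpa using h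

lemma two_mul_mul_le_of_sq_le_mul {a p q : ℝ} (hp : 0 ≤ p) (hq : 0 ≤ q) (ha : a ^ 2 ≤ p * q)
    (x y : ℝ) : 2 * a * x * y ≤ p * x ^ 2 + q * y ^ 2 := by
  have hsq : (2 * a * x * y) ^ 2 ≤ (p * x ^ 2 + q * y ^ 2) ^ 2 := by
    nlinarith [sq_nonneg (p * x ^ 2 - q * y ^ 2), mul_nonneg (sq_nonneg x) (sq_nonneg y)]
  exact (abs_le_of_sq_le_sq hsq (by positivity)).trans' (le_abs_self _)

lemma Summable.mul_of_nonneg_of_le {ι : Type*} {w F : ι → ℝ} {C : ℝ} (hF : Summable F)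
    (hF0 : ∀ i, 0 ≤ F i) (hw0 : ∀ i, 0 ≤ w i) (hw : ∀ i, w i ≤ C) :
    Summable fun i => w i * F i :=
  (hF.mul_left C).of_nonneg_of_le (fun i => mul_nonneg (hw0 i) (hF0 i))
    fun i => mul_le_mul_of_nonneg_right (hw i) (hF0 i)

section Jacobi

variable {a p q : ℕ → ℝ}

lemma summable_mul_add_mul_succ (hp : ∀ n, 0 ≤ p n) (hq : ∀ n, 0 ≤ q n)
    (hpq : ∀ n, p n + q n ≤ 2) {F : ℕ → ℝ} (hF0 : ∀ n, 0 ≤ F n) (hF : Summable F) :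
    Summable fun n => p n * F n + q (n + 1) * F (n + 1) := by
  have hqF := hF.mul_of_nonneg_of_le hF0 hq fun n => (le_add_of_nonneg_left (hp n)).trans (hpq n)
  exact (hF.mul_of_nonneg_of_le hF0 hp fun n => (le_add_of_nonneg_right (hq n)).trans (hpq n)).add
    ((summable_nat_add_iff 1).2 hqF)

lemma tsum_mul_add_mul_succ_le (hp : ∀ n, 0 ≤ p n) (hq : ∀ n, 0 ≤ q n)
    (hpq : ∀ n, p n + q n ≤ 2) {F : ℕ → ℝ} (hF0 : ∀ n, 0 ≤ F n) (hF : Summable F) :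
    ∑' n, (p n * F n + q (n + 1) * F (n + 1)) ≤ 2 * ∑' n, F n := by
  have hpF := hF.mul_of_nonneg_of_le hF0 hp fun n => (le_add_of_nonneg_right (hq n)).trans (hpq n)
  have hqF := hF.mul_of_nonneg_of_le hF0 hq fun n => (le_add_of_nonneg_left (hp n)).trans (hpq n)
  calc ∑' n, (p n * F n + q (n + 1) * F (n + 1))
      = ∑' n, p n * F n + ∑' n, q (n + 1) * F (n + 1) :=
        hpF.tsum_add ((summable_nat_add_iff 1).2 hqF)
    _ ≤ ∑' n, p n * F n + ∑' n, q n * F n := by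
        rw [hqF.tsum_eq_zero_add]
        linarith [mul_nonneg (hq 0) (hF0 0)]
    _ = ∑' n, (p n * F n + q n * F n) := (hpF.tsum_add hqF).symm
    _ ≤ ∑' n, 2 * F n :=
        (hpF.add hqF).tsum_le_tsum (fun n => by nlinarith [hpq n, hF0 n]) (hF.mul_left 2)
    _ = 2 * ∑' n, F n := tsum_mul_left

theorem re_tsum_jacobiLaplacian_mul_conj_nonpos (hp : ∀ n, 0 ≤ p n) (hq : ∀ n, 0 ≤ q n)
    (hpq : ∀ n, p n + q n ≤ 2) (ha : ∀ n, a n ^ 2 ≤ p n * q (n + 1)) {f : ℕ → ℂ}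
    (hf : Memℓp f 2) : (∑' n, jacobiLaplacian a f n * conj (f n)).re ≤ 0 := by
  set F : ℕ → ℝ := fun n => ‖f n‖ ^ 2
  have hF : Summable F := by simpa [F] using (memℓp_gen_iff (by norm_num)).1 hf
  set w : ℕ → ℂ := fun n => a n * (f (n + 1) * conj (f n))
  have hw_le : ∀ n, ‖w n‖ ≤ (p n * F n + q (n + 1) * F (n + 1)) / 2 := by
    intro n
    have := two_mul_mul_le_of_sq_le_mul (hp n) (hq _) ((sq_abs (a n)).trans_le (ha n))
      ‖f n‖ ‖f (n + 1)‖
    simp only [w, F, norm_mul, Complex.norm_real, Real.norm_eq_abs, RCLike.norm_conj]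
    linarith
  have hb := summable_mul_add_mul_succ hp hq hpq (fun n => sq_nonneg ‖f n‖) hF
  have hw : Summable w := (hb.div_const 2).of_norm_bounded hw_le
  have hz_eq : (fun n => jacobiLaplacian a f n * conj (f n)) =
      fun n => w n - 2 * (F n : ℂ) + if n = 0 then 0 else conj (w (n - 1)) := by
    funext n
    rcases n with _ | m <;> exact jacobiLaplacian_mul_conj a f _
  have hz : HasSum (fun n => jacobiLaplacian a f n * conj (f n))
      (∑' n, w n - 2 * ((∑' n, F n : ℝ) : ℂ) + conj (∑' n, w n)) := by
    rw [hz_eq]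
    have h1 : HasSum w (∑' n, w n) := hw.hasSum
    have h2 : HasSum (fun n => 2 * (F n : ℂ)) (2 * ((∑' n, F n : ℝ) : ℂ)) :=
      (Complex.hasSum_ofReal.2 hF.hasSum).mul_left 2
    have h3 : HasSum (fun n => if n = 0 then 0 else conj (w (n - 1))) (conj (∑' n, w n)) :=
      hasSum_ite_zero_pred (g := fun n => conj (w n)) (Complex.hasSum_conj'.2 hw.hasSum)
    exact (h1.sub h2).add h3
  have hW : (∑' n, w n).re ≤ ∑' n, F n := calc
    (∑' n, w n).re ≤ ‖∑' n, w n‖ := Complex.re_le_norm _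
    _ ≤ ∑' n, (p n * F n + q (n + 1) * F (n + 1)) / 2 :=
      tsum_of_norm_bounded (hb.div_const 2).hasSum hw_le
    _ ≤ ∑' n, F n := by
      rw [tsum_div_const]
      linarith [tsum_mul_add_mul_succ_le hp hq hpq (fun n => sq_nonneg ‖f n‖) hF]
  rw [hz.tsum_eq]
  simp only [Complex.add_re, Complex.sub_re, Complex.conj_re, Complex.mul_re, Complex.re_ofNat,
    Complex.im_ofNat, Complex.ofReal_re, Complex.ofReal_im, mul_zero, sub_zero]
  linarith

end Jacobi

lemma aUltra_sq {l : ℝ} (hl : 0 < l) (n : ℕ) :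
    aUltra l n ^ 2 = (n + 2 * l) / (n + l) * (((n + 1 : ℕ) : ℝ) / ((n + 1 : ℕ) + l)) := by
  have hn : 0 < (n : ℝ) + l := by positivity
  rw [aUltra, Real.sq_sqrt (by positivity)]
  push_cast
  field_simp
  ring

theorem deltaUltra_negative (l : ℝ) (hl : 0 < l) (f : ℕ → ℂ) (hf : Memℓp f 2) :
    (∑' n : ℕ, deltaUltra l f n * (starRingEnd ℂ) (f n)).re ≤ 0 := by
  rw [deltaUltra_eq_jacobiLaplacian]
  refine re_tsum_jacobiLaplacian_mul_conj_nonpos (p := fun n => (n + 2 * l) / (n + l))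
    (q := fun n => n / (n + l)) (fun n => by positivity) (fun n => by positivity)
    (fun n => ?_) (fun n => (aUltra_sq hl n).le) hf
  rw [← add_div, div_le_iff₀ (by positivity)]
  linarith
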